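/- The real 2×2 matrix M = [[2/β₁², √2·β₋₁/(β₁·β₂)], [−√2·β₋₁/(β₁·β₂), 2/β₁²]] is orthogonal, i.e. Mᵀ·M is the identity matrix. (This is the unitarity of the (ẽ,5)-cell matrix of the biunitary connection κ for the AH+1 subfactor.) -/

import Mathlib

open Matrix

/-- β₋₁ = √((9+√17)/2) -/
noncomputable def βm1 : ℝ := Real.sqrt ((9 + Real.sqrt 17) / 2)

/-- β₁ = √((5+√17)/2) -/
noncomputable def β₁ : ℝ := Real.sqrt ((5 + Real.sqrt 17) / 2)

/-- β₂ = √((3+√17)/2) -/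
noncomputable def β₂ : ℝ := Real.sqrt ((3 + Real.sqrt 17) / 2)

/-- The (ẽ,5)-cell matrix of the biunitary connection κ for AH+1. -/
noncomputable def M : Matrix (Fin 2) (Fin 2) ℝ :=
  !![2 / β₁ ^ 2, Real.sqrt 2 * βm1 / (β₁ * β₂);
     -(Real.sqrt 2) * βm1 / (β₁ * β₂), 2 / β₁ ^ 2]

/-! A matrix `!![a, b; -b, a]` is orthogonal as soon as `a² + b² = 1`, and here, with
`s = √17` one has `β₁⁴ = (21 + 5s)/2`, `β₁²β₂² = 8 + 2s` and `2β₋₁² = 9 + s`, so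
`4/β₁⁴ + 2β₋₁²/(β₁²β₂²) = (338 + 82s)/(338 + 82s) = 1`. -/

theorem Matrix.transpose_mul_self_eq_one_of_sq_add_sq_eq_one {R : Type*} [CommRing R] {a b : R}
    (h : a ^ 2 + b ^ 2 = 1) : (!![a, b; -b, a])ᵀ * !![a, b; -b, a] = 1 := by
  rw [one_fin_two, ← h]
  ext i j
  fin_cases i <;> fin_cases j <;>
    simp only [mul_apply, transpose_apply, of_apply, cons_val', cons_val_zero, cons_val_one,
      cons_val_fin_one, Fin.sum_univ_two, Fin.isValue, Fin.zero_eta, Fin.mk_one] <;> ring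

lemma β₁_sq : β₁ ^ 2 = (5 + Real.sqrt 17) / 2 := Real.sq_sqrt (by positivity)

lemma β₂_sq : β₂ ^ 2 = (3 + Real.sqrt 17) / 2 := Real.sq_sqrt (by positivity)

lemma βm1_sq : βm1 ^ 2 = (9 + Real.sqrt 17) / 2 := Real.sq_sqrt (by positivity)

lemma M_entries_sq_add_sq :
    (2 / β₁ ^ 2) ^ 2 + (Real.sqrt 2 * βm1 / (β₁ * β₂)) ^ 2 = 1 := by
  have hs : Real.sqrt 17 ^ 2 = 17 := Real.sq_sqrt (by norm_num)
  rw [div_pow, div_pow, mul_pow, mul_pow, Real.sq_sqrt zero_le_two, β₁_sq, β₂_sq, βm1_sq]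
  field_simp
  linear_combination (-9 - Real.sqrt 17) * hs

/-- The (ẽ,5)-cell matrix of the connection κ for AH+1 is orthogonal. -/
theorem stmt_4 : Mᵀ * M = (1 : Matrix (Fin 2) (Fin 2) ℝ) := by
  have hM : M = !![2 / β₁ ^ 2, Real.sqrt 2 * βm1 / (β₁ * β₂);
      -(Real.sqrt 2 * βm1 / (β₁ * β₂)), 2 / β₁ ^ 2] := by
    rw [M, neg_mul, neg_div]
  rw [hM, Matrix.transpose_mul_self_eq_one_of_sq_add_sq_eq_one M_entries_sq_add_sq]
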